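/- For an array A[1..n] with no consecutive equal elements and any i in {1,...,n-1}: if Min(A) is the relevant tree of node i (i.e., node i is internal in Min(A)), then f(i+1, Min(A)) = f(i, Min(A)) + 1 and f(i+1, Max(A)) = f(i, Max(A)) + k for some k > 1; otherwise f(i+1, Max(A)) = f(i, Max(A)) + 1 and f(i+1, Min(A)) = f(i, Min(A)) + k for some k > 1. -/

import Mathlib

/-!
Both `Min(A)` and `Max(A)` are trees on `{0, …, n}` numbered in preorder (the parent of `j + 1` is
an ancestor of `j`), with parent arrays `psv A` and `plv A`. For any such tree the BP sequence is
the concatenation over `j` of an opening parenthesis for `j` followed by closing parentheses for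
`j` and for those of its ancestors that are not ancestors of `j + 1`; this follows by induction
over subtrees, each subtree occupying an interval of indices. Hence `f(i + 1) - f(i)` is one plus
the number of those closings: it is `1` when `i` is the parent of `i + 1` and at least `2`
otherwise, since then `i` itself is closed. As `A i ≠ A (i + 1)`, node `i` is the parent of
`i + 1` in exactly one of the two trees: in `Min(A)` iff `A i < A (i + 1)`, iff `i` is internal
in `Min(A)`.
-/

def psv (A : ℕ → ℤ) (i : ℕ) : ℕ := Nat.findGreatest (fun j => A j < A i) (i - 1)

def plv (A : ℕ → ℤ) (i : ℕ) : ℕ := Nat.findGreatest (fun j => A i < A j) (i - 1)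

def internalMin (A : ℕ → ℤ) (n i : ℕ) : Prop := ∃ j, 1 ≤ j ∧ j ≤ n ∧ psv A j = i

def internalMax (A : ℕ → ℤ) (n i : ℕ) : Prop := ∃ j, 1 ≤ j ∧ j ≤ n ∧ plv A j = i

def leafMin (A : ℕ → ℤ) (n i : ℕ) : Prop := ¬ internalMin A n i

def leafMax (A : ℕ → ℤ) (n i : ℕ) : Prop := ¬ internalMax A n i

def NoConsecEq (A : ℕ → ℤ) (n : ℕ) : Prop := ∀ i, 1 ≤ i → i < n → A i ≠ A (i + 1)

def isLeftmostChildMin (A : ℕ → ℤ) (n c : ℕ) : Prop :=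
  1 ≤ c ∧ c ≤ n ∧ ∀ j, 1 ≤ j → j ≤ n → psv A j = psv A c → c ≤ j

def isLeftmostChildMax (A : ℕ → ℤ) (n c : ℕ) : Prop :=
  1 ≤ c ∧ c ≤ n ∧ ∀ j, 1 ≤ j → j ≤ n → plv A j = plv A c → c ≤ j

def immLeftSibMin (A : ℕ → ℤ) (n j i : ℕ) : Prop :=
  1 ≤ j ∧ j < i ∧ i ≤ n ∧ psv A j = psv A i ∧ ∀ k, j < k → k < i → psv A k ≠ psv A i

def immLeftSibMax (A : ℕ → ℤ) (n j i : ℕ) : Prop :=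
  1 ≤ j ∧ j < i ∧ i ≤ n ∧ plv A j = plv A i ∧ ∀ k, j < k → k < i → plv A k ≠ plv A i

def redMin (A : ℕ → ℤ) (n i : ℕ) : Prop := ∃ j, immLeftSibMin A n j i ∧ A j ≠ A i

def redMax (A : ℕ → ℤ) (n i : ℕ) : Prop := ∃ j, immLeftSibMax A n j i ∧ A j ≠ A i

def validMin (A : ℕ → ℤ) (n i : ℕ) : Prop :=
  1 ≤ i ∧ i ≤ n ∧ ¬ isLeftmostChildMin A n i ∧ ¬ ∃ j, immLeftSibMin A n j i ∧ leafMin A n j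

def validMax (A : ℕ → ℤ) (n i : ℕ) : Prop :=
  1 ≤ i ∧ i ≤ n ∧ ¬ isLeftmostChildMax A n i ∧ ¬ ∃ j, immLeftSibMax A n j i ∧ leafMax A n j

inductive LTree where
  | node : ℕ → List LTree → LTree

mutual
def bpt : LTree → List (Bool × ℕ)
  | .node l cs => (false, l) :: bptL cs ++ [(true, l)]
def bptL : List LTree → List (Bool × ℕ)
  | [] => []
  | t :: ts => bpt t ++ bptL ts
end

def bpSeq (t : LTree) : List Bool := (bpt t).map Prod.fst

def fpos (t : LTree) (i : ℕ) : ℕ := (bpt t).idxOf (false, i) + 1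

def childList (P : ℕ → ℕ) (n i : ℕ) : List ℕ :=
  (List.range (n + 1)).filter (fun j => decide (1 ≤ j ∧ P j = i ∧ i < j))

def buildTree (P : ℕ → ℕ) (n : ℕ) : ℕ → ℕ → LTree
  | 0, i => .node i []
  | fuel + 1, i => .node i ((childList P n i).map (buildTree P n fuel))

def minTree (A : ℕ → ℤ) (n : ℕ) : LTree := buildTree (psv A) n (n + 1) 0

def maxTree (A : ℕ → ℤ) (n : ℕ) : LTree := buildTree (plv A) n (n + 1) 0

namespace PreorderTree

open Relation

def HasParent (P : ℕ → ℕ) (n j p : ℕ) : Prop := 0 < j ∧ j ≤ n ∧ P j = p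

abbrev IsAncestor (P : ℕ → ℕ) (n a j : ℕ) : Prop := ReflTransGen (HasParent P n) j a

/-- `P` is the parent array of a tree on `{0, …, n}` rooted at `0` whose nodes are numbered in
preorder: the parent of `j + 1` lies on the path from the root to `j`. -/
structure IsPreorderParent (P : ℕ → ℕ) (n : ℕ) : Prop where
  lt_self : ∀ j, 0 < j → j ≤ n → P j < j
  isAncestor_succ : ∀ j, j < n → IsAncestor P n (P (j + 1)) j

variable {P : ℕ → ℕ} {n : ℕ}

theorem isAncestor_parent {a j : ℕ} (hj : 0 < j) (hjn : j ≤ n) (h : IsAncestor P n a (P j)) :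
    IsAncestor P n a j :=
  ReflTransGen.head ⟨hj, hjn, rfl⟩ h

theorem IsAncestor.eq_or_parent {a j : ℕ} (h : IsAncestor P n a j) :
    a = j ∨ 0 < j ∧ j ≤ n ∧ IsAncestor P n a (P j) := by
  rcases ReflTransGen.cases_head h with h | ⟨c, ⟨hj, hjn, rfl⟩, hc⟩
  · exact Or.inl h.symm
  · exact Or.inr ⟨hj, hjn, hc⟩

theorem IsAncestor.total {a b j : ℕ} (ha : IsAncestor P n a j) (hb : IsAncestor P n b j) :
    IsAncestor P n a b ∨ IsAncestor P n b a :=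
  (ReflTransGen.total_of_right_unique (fun _ _ _ h h' => h.2.2.symm.trans h'.2.2) ha hb).symm

noncomputable def subtreeEnd (P : ℕ → ℕ) (n i : ℕ) : ℕ :=
  sInf {j | i < j ∧ ¬ (j ≤ n ∧ IsAncestor P n i j)}

theorem subtreeEnd_mem (P : ℕ → ℕ) (n i : ℕ) :
    i < subtreeEnd P n i ∧ ¬ (subtreeEnd P n i ≤ n ∧ IsAncestor P n i (subtreeEnd P n i)) :=
  Nat.sInf_mem (s := {j | i < j ∧ ¬ (j ≤ n ∧ IsAncestor P n i j)}) ⟨i + n + 1, by omega, by omega⟩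

theorem lt_subtreeEnd (P : ℕ → ℕ) (n i : ℕ) : i < subtreeEnd P n i :=
  (subtreeEnd_mem P n i).1

theorem subtreeEnd_le {i : ℕ} (hi : i ≤ n) : subtreeEnd P n i ≤ n + 1 :=
  Nat.sInf_le ⟨by omega, by omega⟩

def childrenIn (P : ℕ → ℕ) (p a b : ℕ) : List ℕ :=
  (List.range' a (b - a)).filter fun d => P d = p

theorem mem_childrenIn {p a b d : ℕ} : d ∈ childrenIn P p a b ↔ a ≤ d ∧ d < b ∧ P d = p := by
  simp only [childrenIn, List.mem_filter, List.mem_range'_1, decide_eq_true_eq]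
  omega

theorem pairwise_childrenIn (P : ℕ → ℕ) (p a b : ℕ) : (childrenIn P p a b).Pairwise (· < ·) :=
  List.Pairwise.filter _ List.pairwise_lt_range'

theorem childrenIn_self (P : ℕ → ℕ) (p a : ℕ) : childrenIn P p a a = [] := by
  simp [childrenIn]

def ancestorChain (P : ℕ → ℕ) (K j : ℕ) : List ℕ :=
  if j < K then [] else j :: if P j < j then ancestorChain P K (P j) else []
termination_by j

def closeBound (P : ℕ → ℕ) (n j : ℕ) : ℕ := if j < n then P (j + 1) + 1 else 0

/-- The opening parenthesis of `j`, then the closing parentheses of `j` and of those ancestors of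
`j` that are not ancestors of `j + 1` (of all of them when `j = n`). -/
def segment (P : ℕ → ℕ) (n j : ℕ) : List (Bool × ℕ) :=
  (false, j) :: (ancestorChain P (closeBound P n j) j).map (Prod.mk true)

def segments (P : ℕ → ℕ) (n a b : ℕ) : List (Bool × ℕ) :=
  ((List.range' a (b - a)).map (segment P n)).flatten

theorem ancestorChain_of_lt {K j : ℕ} (h : j < K) : ancestorChain P K j = [] := by
  rw [ancestorChain, if_pos h]

theorem ancestorChain_eq_cons_tail {K j : ℕ} (h : K ≤ j) :
    ancestorChain P K j = j :: (ancestorChain P K j).tail := by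
  rw [ancestorChain, if_neg (by omega), List.tail_cons]

theorem ancestorChain_tail {K j : ℕ} (h : K ≤ j) (hj : P j < j) :
    (ancestorChain P K j).tail = ancestorChain P K (P j) := by
  rw [ancestorChain, if_neg (by omega), List.tail_cons, if_pos hj]

theorem closeBound_pred {j : ℕ} (h : 0 < j) (hj : j ≤ n) : closeBound P n (j - 1) = P j + 1 := by
  rw [closeBound, if_pos (by omega), Nat.sub_add_cancel h]

theorem segments_append {a b c : ℕ} (hab : a ≤ b) (hbc : b ≤ c) :
    segments P n a b ++ segments P n b c = segments P n a c := by
  obtain ⟨k, rfl⟩ := Nat.exists_eq_add_of_le hab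
  obtain ⟨l, rfl⟩ := Nat.exists_eq_add_of_le hbc
  rw [segments, segments, segments, Nat.add_sub_cancel_left, Nat.add_sub_cancel_left,
    Nat.add_assoc, Nat.add_sub_cancel_left, ← List.range'_append_1, List.map_append,
    List.flatten_append]

theorem segments_eq_cons {a b : ℕ} (h : a < b) :
    segments P n a b = segment P n a ++ segments P n (a + 1) b := by
  rw [segments, segments, show b - a = b - (a + 1) + 1 by omega, List.range'_succ]
  simp

theorem segments_self (a : ℕ) : segments P n a a = [] := by
  simp [segments]

theorem mk_false_mem_segments {a b m : ℕ} : (false, m) ∈ segments P n a b ↔ a ≤ m ∧ m < b := by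
  simp [segments, segment]
  omega

theorem bptL_eq_flatten (ts : List LTree) : bptL ts = (ts.map bpt).flatten := by
  induction ts with
  | nil => simp [bptL]
  | cons t ts ih => simp [bptL, ih]

theorem bpt_buildTree_succ (F i : ℕ) :
    bpt (buildTree P n (F + 1) i) =
      (false, i) :: ((childList P n i).map fun c => bpt (buildTree P n F c)).flatten ++
        [(true, i)] := by
  simp [buildTree, bpt, bptL_eq_flatten, Function.comp_def]

namespace IsPreorderParent

variable (hP : IsPreorderParent P n)
include hP

theorem lt_of_hasParent {c p : ℕ} (hc : HasParent P n c p) : p < c :=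
  hc.2.2 ▸ hP.lt_self c hc.1 hc.2.1

theorem le_of_isAncestor {a j : ℕ} (h : IsAncestor P n a j) : a ≤ j := by
  induction h with
  | refl => rfl
  | tail _ hs ih =>
    obtain ⟨h0, hn, rfl⟩ := hs
    exact (hP.lt_self _ h0 hn).le.trans ih

theorem isAncestor_zero {j : ℕ} (hj : j ≤ n) : IsAncestor P n 0 j := by
  induction j using Nat.strong_induction_on with
  | _ j ih =>
    rcases Nat.eq_zero_or_pos j with rfl | hpos
    · exact ReflTransGen.refl
    · have := hP.lt_self j hpos hj
      exact isAncestor_parent hpos hj (ih _ this (by omega))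

theorem isAncestor_of_le_of_le {i j m : ℕ} (h : IsAncestor P n i j) (him : i ≤ m)
    (hmj : m ≤ j) : IsAncestor P n i m := by
  induction j, hmj using Nat.le_induction with
  | base => exact h
  | succ j hmj ih =>
    apply ih
    rcases h.eq_or_parent with rfl | ⟨-, hjn, hpar⟩
    · omega
    · exact (hP.isAncestor_succ j (by omega)).trans hpar

theorem isAncestor_iff {i j : ℕ} (hj : j ≤ n) :
    IsAncestor P n i j ↔ i ≤ j ∧ j < subtreeEnd P n i := by
  refine ⟨fun h => ⟨hP.le_of_isAncestor h, ?_⟩, fun ⟨hij, hje⟩ => ?_⟩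
  · by_contra! hej
    exact (subtreeEnd_mem P n i).2
      ⟨by omega, hP.isAncestor_of_le_of_le h (lt_subtreeEnd P n i).le hej⟩
  · rcases hij.eq_or_lt with rfl | hij
    · exact ReflTransGen.refl
    · by_contra h
      exact Nat.notMem_of_lt_sInf hje ⟨hij, fun h' => h h'.2⟩

theorem subtreeEnd_zero : subtreeEnd P n 0 = n + 1 := by
  refine (subtreeEnd_le n.zero_le).antisymm (not_lt.mp fun h => ?_)
  exact (subtreeEnd_mem P n 0).2 ⟨by omega, hP.isAncestor_zero (by omega)⟩

theorem subtreeEnd_le_subtreeEnd {c p : ℕ} (h : IsAncestor P n p c) (hc : c ≤ n) :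
    subtreeEnd P n c ≤ subtreeEnd P n p := by
  by_contra! hlt
  have hpc := (hP.isAncestor_iff hc).1 h
  have hen : subtreeEnd P n p ≤ n := by have := subtreeEnd_le (P := P) hc; omega
  have hce := (hP.isAncestor_iff hen).2 ⟨by omega, hlt⟩
  exact (subtreeEnd_mem P n p).2 ⟨hen, hce.trans h⟩

theorem isAncestor_parent_subtreeEnd {i : ℕ} (he : subtreeEnd P n i ≤ n) :
    IsAncestor P n (P (subtreeEnd P n i)) i ∧ P (subtreeEnd P n i) < i := by
  set e := subtreeEnd P n i
  have hie := lt_subtreeEnd P n i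
  have hnot : ¬ IsAncestor P n i e := fun h => (subtreeEnd_mem P n i).2 ⟨he, h⟩
  have hlast : IsAncestor P n i (e - 1) := (hP.isAncestor_iff (by omega)).2 ⟨by omega, by omega⟩
  have hpe : IsAncestor P n (P e) (e - 1) := by
    simpa [show e - 1 + 1 = e by omega] using hP.isAncestor_succ (e - 1) (by omega)
  rcases hlast.total hpe with h | h
  · exact absurd (isAncestor_parent (by omega) he h) hnot
  · refine ⟨h, (hP.le_of_isAncestor h).lt_of_ne fun hPe => hnot ?_⟩
    exact isAncestor_parent (by omega) he (hPe ▸ ReflTransGen.refl)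

theorem childList_eq_childrenIn {i : ℕ} (hi : i ≤ n) :
    childList P n i = childrenIn P i (i + 1) (subtreeEnd P n i) := by
  refine (List.pairwise_lt_range.filter _).eq_of_mem_iff (pairwise_childrenIn P i _ _)
    fun c => ?_
  simp only [List.mem_filter, List.mem_range, decide_eq_true_eq, mem_childrenIn]
  have := subtreeEnd_le (P := P) hi
  constructor
  · rintro ⟨hcn, hc, hPc, hic⟩
    have hchild : HasParent P n c i := ⟨hc, by omega, hPc⟩
    exact ⟨hic, ((hP.isAncestor_iff hchild.2.1).1 (.single hchild)).2, hPc⟩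
  · rintro ⟨hic, hce, hPc⟩
    exact ⟨by omega, by omega, hPc, hic⟩

theorem childrenIn_eq_cons {c p : ℕ} (hc : HasParent P n c p) :
    childrenIn P p c (subtreeEnd P n p) =
      c :: childrenIn P p (subtreeEnd P n c) (subtreeEnd P n p) := by
  have hpc := hP.lt_of_hasParent hc
  have hce := lt_subtreeEnd P n c
  refine (pairwise_childrenIn P p _ _).eq_of_mem_iff
    (List.pairwise_cons.2 ⟨fun d hd => by have := (mem_childrenIn.1 hd).1; omega,
      pairwise_childrenIn P p _ _⟩) fun d => ?_
  have hcp := (hP.isAncestor_iff hc.2.1).1 (.single hc)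
  have hep := hP.subtreeEnd_le_subtreeEnd (.single hc) hc.2.1
  simp only [List.mem_cons, mem_childrenIn]
  constructor
  · rintro ⟨hcd, hdp, hPd⟩
    refine (lt_or_ge d (subtreeEnd P n c)).imp (fun hdc => ?_) fun hed => ⟨hed, hdp, hPd⟩
    by_contra hne
    have hdn : d ≤ n := by have := subtreeEnd_le (P := P) hc.2.1; omega
    rcases ((hP.isAncestor_iff hdn).2 ⟨hcd, hdc⟩).eq_or_parent with h | ⟨-, -, h⟩
    · exact hne h.symm
    · have := hP.le_of_isAncestor h
      omega
  · rintro (rfl | ⟨hed, hdp, hPd⟩)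
    · exact ⟨le_rfl, hcp.2, hc.2.2⟩
    · exact ⟨by omega, hdp, hPd⟩

theorem hasParent_subtreeEnd {c p : ℕ} (hc : HasParent P n c p)
    (hlt : subtreeEnd P n c < subtreeEnd P n p) :
    HasParent P n (subtreeEnd P n c) p := by
  have hpc := hP.lt_of_hasParent hc
  have hce := lt_subtreeEnd P n c
  have hen : subtreeEnd P n c ≤ n := by
    have := subtreeEnd_le (P := P) (n := n) (i := p) (by have := hc.2.1; omega)
    omega
  obtain ⟨hanc, hlt'⟩ := hP.isAncestor_parent_subtreeEnd hen
  have hle : P (subtreeEnd P n c) ≤ p := by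
    rcases hanc.eq_or_parent with h | ⟨-, -, h⟩
    · omega
    · exact hc.2.2 ▸ hP.le_of_isAncestor h
  have hge : p ≤ P (subtreeEnd P n c) := by
    rcases ((hP.isAncestor_iff hen).2 ⟨by omega, hlt⟩).eq_or_parent with h | ⟨-, -, h⟩
    · omega
    · exact hP.le_of_isAncestor h
  exact ⟨by omega, hen, by omega⟩

theorem closeBound_subtreeEnd_le {i : ℕ} : closeBound P n (subtreeEnd P n i - 1) ≤ i := by
  unfold closeBound
  split_ifs with h
  · have := lt_subtreeEnd P n i
    have := (hP.isAncestor_parent_subtreeEnd (i := i) (by omega)).2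
    rw [Nat.sub_add_cancel (by omega)]
    omega
  · exact i.zero_le

theorem segments_children {p : ℕ}
    (hsub : ∀ c, p < c → c ≤ n → ∀ F, n + 1 - c ≤ F →
      segments P n c (subtreeEnd P n c) = bpt (buildTree P n F c) ++
        (ancestorChain P (closeBound P n (subtreeEnd P n c - 1)) c).tail.map (Prod.mk true))
    {c : ℕ} (hc : HasParent P n c p) {F : ℕ} (hF : n - p ≤ F) :
    segments P n c (subtreeEnd P n p) =
      ((childrenIn P p c (subtreeEnd P n p)).map fun d => bpt (buildTree P n F d)).flatten ++
        (ancestorChain P (closeBound P n (subtreeEnd P n p - 1)) p).map (Prod.mk true) := by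
  induction c using Nat.strong_decreasing_induction with
  | base => exact ⟨n, fun m hm hc => by have := hc.2.1; omega⟩
  | step c ih =>
    have hpc := hP.lt_of_hasParent hc
    have hK := hP.closeBound_subtreeEnd_le (i := c)
    have hPc := hP.lt_self c hc.1 hc.2.1
    have hsubc := hsub c hpc hc.2.1 F (by omega)
    rw [hP.childrenIn_eq_cons hc, List.map_cons, List.flatten_cons]
    rcases (hP.subtreeEnd_le_subtreeEnd (.single hc) hc.2.1).eq_or_lt with heq | hlt
    · rw [← heq, childrenIn_self, hsubc, ancestorChain_tail hK hPc, hc.2.2]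
      simp
    · have hnext := hP.hasParent_subtreeEnd hc hlt
      rw [← segments_append (lt_subtreeEnd P n c).le hlt.le, ih _ (lt_subtreeEnd P n c) hnext,
        hsubc, closeBound_pred hnext.1 hnext.2.1, hnext.2.2, ancestorChain_tail (by omega) hPc,
        hc.2.2, ancestorChain_of_lt (Nat.lt_succ_self p)]
      simp

/-- Beyond `bpt` of the subtree of `i`, its last segment also closes the proper ancestors of `i`
that the next node does not share. -/
theorem segments_subtree {i : ℕ} (hi : i ≤ n) {F : ℕ} (hF : n + 1 - i ≤ F) :
    segments P n i (subtreeEnd P n i) = bpt (buildTree P n F i) ++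
      (ancestorChain P (closeBound P n (subtreeEnd P n i - 1)) i).tail.map (Prod.mk true) := by
  induction i using Nat.strong_decreasing_induction generalizing F with
  | base => exact ⟨n, fun m hm hmn => by omega⟩
  | step i ih =>
    obtain ⟨F, rfl⟩ : ∃ F', F = F' + 1 := ⟨F - 1, by omega⟩
    have hK := hP.closeBound_subtreeEnd_le (i := i)
    rw [bpt_buildTree_succ, hP.childList_eq_childrenIn hi]
    rcases Nat.lt_iff_add_one_le.1 (lt_subtreeEnd P n i) |>.eq_or_lt with hleaf | hlt
    · rw [← hleaf, Nat.add_sub_cancel] at hK ⊢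
      rw [childrenIn_self, segments_eq_cons (Nat.lt_succ_self i), segments_self, segment,
        ancestorChain_eq_cons_tail hK]
      simp
    · have hin : i + 1 ≤ n := by have := subtreeEnd_le (P := P) hi; omega
      have hchild : HasParent P n (i + 1) i := by
        rcases ((hP.isAncestor_iff hin).2 ⟨by omega, hlt⟩).eq_or_parent with h | ⟨h0, -, h⟩
        · omega
        · have := hP.le_of_isAncestor h
          have := hP.lt_self (i + 1) h0 hin
          exact ⟨h0, hin, by omega⟩
      rw [segments_eq_cons (lt_subtreeEnd P n i), segment, closeBound, if_pos (by omega),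
        hchild.2.2, ancestorChain_of_lt (Nat.lt_succ_self i),
        hP.segments_children (fun c hc hcn F hF => ih c hc hcn hF) hchild (F := F) (by omega),
        ancestorChain_eq_cons_tail hK]
      simp

theorem bpt_buildTree_eq_segments : bpt (buildTree P n (n + 1) 0) = segments P n 0 (n + 1) := by
  have h := hP.segments_subtree n.zero_le (F := n + 1) le_rfl
  rw [hP.subtreeEnd_zero, Nat.add_sub_cancel, closeBound, if_neg (lt_irrefl n), ancestorChain,
    if_neg (Nat.not_lt_zero 0)] at h
  simpa using h.symm

theorem fpos_buildTree {m : ℕ} (hm : m ≤ n) :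
    fpos (buildTree P n (n + 1) 0) m = (segments P n 0 m).length + 1 := by
  rw [fpos, hP.bpt_buildTree_eq_segments, ← segments_append m.zero_le (by omega),
    segments_eq_cons (a := m) (by omega), segment,
    List.idxOf_append_of_notMem (by simp [mk_false_mem_segments]), List.cons_append,
    List.idxOf_cons_self, Nat.add_zero]

theorem fpos_buildTree_succ {i : ℕ} (hi : i < n) :
    fpos (buildTree P n (n + 1) 0) (i + 1) =
      fpos (buildTree P n (n + 1) 0) i + (segment P n i).length := by
  rw [hP.fpos_buildTree hi, hP.fpos_buildTree hi.le, ← segments_append i.zero_le i.le_succ,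
    segments_eq_cons i.lt_succ_self, segments_self, List.length_append, List.length_append]
  simp only [List.length_nil]
  omega

theorem fpos_buildTree_succ_of_parent_eq {i : ℕ} (hi : i < n) (h : P (i + 1) = i) :
    fpos (buildTree P n (n + 1) 0) (i + 1) = fpos (buildTree P n (n + 1) 0) i + 1 := by
  rw [hP.fpos_buildTree_succ hi, segment, closeBound, if_pos hi, h,
    ancestorChain_of_lt i.lt_succ_self]
  rfl

theorem exists_fpos_buildTree_succ_of_parent_lt {i : ℕ} (hi : i < n) (h : P (i + 1) < i) :
    ∃ k, 1 < k ∧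
      fpos (buildTree P n (n + 1) 0) (i + 1) = fpos (buildTree P n (n + 1) 0) i + k := by
  refine ⟨_, ?_, hP.fpos_buildTree_succ hi⟩
  rw [segment, closeBound, if_pos hi, ancestorChain_eq_cons_tail (by omega)]
  simp

end IsPreorderParent

end PreorderTree

open PreorderTree

theorem psv_lt_self (A : ℕ → ℤ) {j : ℕ} (hj : 0 < j) : psv A j < j :=
  (Nat.findGreatest_le _).trans_lt (by omega)

theorem isPreorderParent_psv (A : ℕ → ℤ) (n : ℕ) : IsPreorderParent (psv A) n := by
  refine ⟨fun j hj _ => psv_lt_self A hj, fun j hj => ?_⟩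
  set k := psv A (j + 1) with hk
  suffices ∀ m, k ≤ m → m ≤ j → IsAncestor (psv A) n k m from
    this j (Nat.findGreatest_le j) le_rfl
  intro m
  induction m using Nat.strong_induction_on with
  | _ m ih =>
    intro hkm hmj
    rcases hkm.eq_or_lt with rfl | hkm'
    · exact .refl
    · have hkpm : k ≤ psv A m := by
        rcases Nat.eq_zero_or_pos k with hk0 | hk0
        · omega
        · have hAk : A k < A (j + 1) := Nat.findGreatest_of_ne_zero hk.symm hk0.ne'
          have hAm : ¬ A m < A (j + 1) := Nat.findGreatest_is_greatest hkm' hmj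
          exact Nat.le_findGreatest (by omega) (by omega)
      have := psv_lt_self A (j := m) (by omega)
      exact isAncestor_parent (by omega) (by omega) (ih _ this hkpm (by omega))

theorem plv_eq_psv_neg (A : ℕ → ℤ) : plv A = psv (-A) := by
  funext i
  simp [psv, plv]

theorem isPreorderParent_plv (A : ℕ → ℤ) (n : ℕ) : IsPreorderParent (plv A) n :=
  plv_eq_psv_neg A ▸ isPreorderParent_psv (-A) n

theorem psv_succ_of_lt {A : ℕ → ℤ} {i : ℕ} (h : A i < A (i + 1)) : psv A (i + 1) = i :=
  (Nat.findGreatest_le i).antisymm (Nat.le_findGreatest le_rfl h)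

theorem psv_succ_lt_of_gt {A : ℕ → ℤ} {i : ℕ} (hi : 0 < i) (h : A (i + 1) < A i) :
    psv A (i + 1) < i :=
  (Nat.findGreatest_le i).lt_of_ne fun he =>
    (Nat.findGreatest_of_ne_zero he hi.ne').asymm h

theorem plv_succ_of_gt {A : ℕ → ℤ} {i : ℕ} (h : A (i + 1) < A i) : plv A (i + 1) = i := by
  rw [plv_eq_psv_neg]
  exact psv_succ_of_lt (by simpa using h)

theorem plv_succ_lt_of_lt {A : ℕ → ℤ} {i : ℕ} (hi : 0 < i) (h : A i < A (i + 1)) :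
    plv A (i + 1) < i := by
  rw [plv_eq_psv_neg]
  exact psv_succ_lt_of_gt hi (by simpa using h)

theorem lt_succ_of_internalMin {A : ℕ → ℤ} {n i : ℕ} (hi : 0 < i) (h : internalMin A n i) :
    A i < A (i + 1) := by
  obtain ⟨j, -, -, hj⟩ := h
  have hAij : A i < A j := Nat.findGreatest_of_ne_zero hj hi.ne'
  have hij : i ≤ j - 1 := hj ▸ Nat.findGreatest_le (j - 1)
  rcases (show i + 1 ≤ j by omega).eq_or_lt with rfl | hlt
  · exact hAij
  · have hgreat : psv A j < i + 1 := by omega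
    have : ¬ A (i + 1) < A j := Nat.findGreatest_is_greatest hgreat (by omega)
    omega

theorem stmt5 (A : ℕ → ℤ) (n : ℕ) (h : NoConsecEq A n) (i : ℕ)
    (h1 : 1 ≤ i) (h2 : i < n) :
    (internalMin A n i →
      fpos (minTree A n) (i + 1) = fpos (minTree A n) i + 1 ∧
      ∃ k, 1 < k ∧ fpos (maxTree A n) (i + 1) = fpos (maxTree A n) i + k) ∧
    (¬ internalMin A n i →
      fpos (maxTree A n) (i + 1) = fpos (maxTree A n) i + 1 ∧
      ∃ k, 1 < k ∧ fpos (minTree A n) (i + 1) = fpos (minTree A n) i + k) := by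
  have hmin := isPreorderParent_psv A n
  have hmax := isPreorderParent_plv A n
  rcases (h i h1 h2).lt_or_gt with hlt | hgt
  · have hint : internalMin A n i := ⟨i + 1, by omega, by omega, psv_succ_of_lt hlt⟩
    exact ⟨fun _ => ⟨hmin.fpos_buildTree_succ_of_parent_eq h2 (psv_succ_of_lt hlt),
      hmax.exists_fpos_buildTree_succ_of_parent_lt h2 (plv_succ_lt_of_lt h1 hlt)⟩,
      fun hnot => absurd hint hnot⟩
  · have hint : ¬ internalMin A n i := fun hi => (lt_succ_of_internalMin h1 hi).asymm hgt
    exact ⟨fun hi => absurd hi hint,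
      fun _ => ⟨hmax.fpos_buildTree_succ_of_parent_eq h2 (plv_succ_of_gt hgt),
        hmin.exists_fpos_buildTree_succ_of_parent_lt h2 (psv_succ_lt_of_gt h1 hgt)⟩⟩
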